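/- arXiv:2010.15671 — 4 statements merged into one kernel-verified Lean document; each statement's English description precedes it below -/
import Mathlib

section
/- For any fuzzy labeled graph G = ⟨V, E, L, Σ_V, Σ_E⟩ with V nonempty, there exists a largest bisimulation of G (a bisimulation of G that contains every bisimulation of G), and this largest bisimulation is an equivalence relation on V. -/
/-- A fuzzy labeled graph `G = ⟨V, E, L, Σ_V, Σ_E⟩`: the fuzzy set of labeled
edges `E : V × Σ_E × V → [0,1]` and the labeling function `L : V → (Σ_V → [0,1])`. -/
structure FuzzyGraph (V SV SE : Type*) where
  edge : V → SE → V → unitInterval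
  lab : V → SV → unitInterval

/-- A nonempty binary relation `Z ⊆ V × V` is a (crisp) bisimulation of `G`. -/
def IsBisimulation {V SV SE : Type*} (G : FuzzyGraph V SV SE) (Z : V → V → Prop) : Prop :=
  (∃ x x', Z x x') ∧
  (∀ x x', Z x x' → G.lab x = G.lab x') ∧
  (∀ x x' y (r : SE), Z x x' → 0 < G.edge x r y →
      ∃ y', Z y y' ∧ G.edge x r y ≤ G.edge x' r y') ∧
  (∀ x x' y' (r : SE), Z x x' → 0 < G.edge x' r y' →
      ∃ y, Z y y' ∧ G.edge x' r y' ≤ G.edge x r y)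

/-!
Every clause of the definition of a bisimulation concerns a single related pair, so the union of
all bisimulations is again one as soon as some bisimulation exists, e.g. equality. Since the
converse and the composite of bisimulations are bisimulations, this union is an equivalence.
-/

def FuzzyGraph.Bisimilar {V SV SE : Type*} (G : FuzzyGraph V SV SE) (x x' : V) : Prop :=
  ∃ Z, IsBisimulation G Z ∧ Z x x'

section

variable {V SV SE : Type*} (G : FuzzyGraph V SV SE)

theorem isBisimulation_eq [Nonempty V] : IsBisimulation G (· = ·) := by
  refine ⟨⟨Classical.arbitrary V, _, rfl⟩, ?_, ?_, ?_⟩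
  · rintro x _ rfl
    rfl
  · rintro x _ y r rfl -
    exact ⟨y, rfl, le_rfl⟩
  · rintro x _ y' r rfl -
    exact ⟨y', rfl, le_rfl⟩

variable {G}

theorem IsBisimulation.flip {Z : V → V → Prop} (hZ : IsBisimulation G Z) :
    IsBisimulation G (flip Z) := by
  obtain ⟨⟨x, x', hxx'⟩, hlab, hforth, hback⟩ := hZ
  exact ⟨⟨x', x, hxx'⟩, fun x x' h => (hlab x' x h).symm,
    fun x x' y r h => hback x' x y r h, fun x x' y' r h => hforth x' x y' r h⟩

theorem IsBisimulation.comp {Z₁ Z₂ : V → V → Prop} (h₁ : IsBisimulation G Z₁)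
    (h₂ : IsBisimulation G Z₂) (hne : ∃ x y z, Z₁ x y ∧ Z₂ y z) :
    IsBisimulation G (Relation.Comp Z₁ Z₂) := by
  obtain ⟨-, hlab₁, hforth₁, hback₁⟩ := h₁
  obtain ⟨-, hlab₂, hforth₂, hback₂⟩ := h₂
  refine ⟨?_, ?_, ?_, ?_⟩
  · obtain ⟨x, y, z, hxy, hyz⟩ := hne
    exact ⟨x, z, y, hxy, hyz⟩
  · rintro x x' ⟨y, hxy, hyx'⟩
    exact (hlab₁ x y hxy).trans (hlab₂ y x' hyx')
  · rintro x x' u r ⟨y, hxy, hyx'⟩ hu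
    obtain ⟨v, huv, hle₁⟩ := hforth₁ x y u r hxy hu
    obtain ⟨w, hvw, hle₂⟩ := hforth₂ y x' v r hyx' (hu.trans_le hle₁)
    exact ⟨w, ⟨v, huv, hvw⟩, hle₁.trans hle₂⟩
  · rintro x x' w r ⟨y, hxy, hyx'⟩ hw
    obtain ⟨v, hvw, hle₂⟩ := hback₂ y x' w r hyx' hw
    obtain ⟨u, huv, hle₁⟩ := hback₁ x y v r hxy (hw.trans_le hle₂)
    exact ⟨u, ⟨v, huv, hvw⟩, hle₂.trans hle₁⟩

theorem IsBisimulation.bisimilar {Z : V → V → Prop} (hZ : IsBisimulation G Z) :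
    IsBisimulation G G.Bisimilar := by
  obtain ⟨x, x', hxx'⟩ := hZ.1
  refine ⟨⟨x, x', Z, hZ, hxx'⟩, ?_, ?_, ?_⟩
  · rintro x x' ⟨Z', hZ', hxx'⟩
    exact hZ'.2.1 x x' hxx'
  · rintro x x' y r ⟨Z', hZ', hxx'⟩ hy
    obtain ⟨y', hyy', hle⟩ := hZ'.2.2.1 x x' y r hxx' hy
    exact ⟨y', ⟨Z', hZ', hyy'⟩, hle⟩
  · rintro x x' y' r ⟨Z', hZ', hxx'⟩ hy'
    obtain ⟨y, hyy', hle⟩ := hZ'.2.2.2 x x' y' r hxx' hy'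
    exact ⟨y, ⟨Z', hZ', hyy'⟩, hle⟩

variable (G)

theorem bisimilar_equivalence [Nonempty V] : Equivalence G.Bisimilar where
  refl _ := ⟨_, isBisimulation_eq G, rfl⟩
  symm := fun ⟨_, hZ, hxy⟩ => ⟨_, hZ.flip, hxy⟩
  trans := fun {x y z} ⟨_, h₁, hxy⟩ ⟨_, h₂, hyz⟩ =>
    ⟨_, h₁.comp h₂ ⟨x, y, z, hxy, hyz⟩, y, hxy, hyz⟩

end

/-- The largest bisimulation of a fuzzy graph (with nonempty vertex set) exists
and is an equivalence relation. -/
theorem largest_bisimulation_exists_and_equivalence {V SV SE : Type*} [Nonempty V]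
    (G : FuzzyGraph V SV SE) :
    ∃ Z : V → V → Prop, IsBisimulation G Z ∧
      (∀ Z' : V → V → Prop, IsBisimulation G Z' → ∀ x x', Z' x x' → Z x x') ∧
      Equivalence Z :=
  ⟨G.Bisimilar, (isBisimulation_eq G).bisimilar, fun Z' hZ' _ _ h => ⟨Z', hZ', h⟩,
    bisimilar_equivalence G⟩
end

section
/- Let G = ⟨V, E, L, Σ_V, Σ_E⟩ be a fuzzy labeled graph, let 𝕊 be a stable partition of V that is a refinement of a partition ℙ, which in turn is a refinement of a partition ℚ, and let Y' ∈ ℙ and Y ∈ ℚ be blocks with Y' ⊊ Y. Then, for any r ∈ Σ_E, 𝕊 is stable with respect to both ⟨Y', r⟩ and ⟨Y ∖ Y', r⟩; consequently, 𝕊 is a refinement of every partition ℙ' that is the coarsest refinement of ℙ stable with respect to both ⟨Y', r⟩ and ⟨Y ∖ Y', r⟩. -/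
instance : Fact ((0:ℝ) ≤ 1) := ⟨zero_le_one⟩

/-- `sup E(x,r,Y)`, the supremum being taken in the complete lattice `[0,1]`. -/
noncomputable def supE {V SV SE : Type*} (G : FuzzyGraph V SV SE)
    (x : V) (r : SE) (Y : Set V) : unitInterval :=
  ⨆ y ∈ Y, G.edge x r y

/-- A set `X ⊆ V` is stable w.r.t. `⟨Y,r⟩` if `sup E(x,r,Y) = sup E(x',r,Y)`
for all `x, x' ∈ X`. -/
def StableWith {V SV SE : Type*} (G : FuzzyGraph V SV SE)
    (X Y : Set V) (r : SE) : Prop :=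
  ∀ x ∈ X, ∀ x' ∈ X, supE G x r Y = supE G x' r Y

/-- A partition `ℙ` is stable w.r.t. `⟨Y,r⟩` if every block of `ℙ` is. -/
def PartStableWith {V SV SE : Type*} (G : FuzzyGraph V SV SE)
    (P : Set (Set V)) (Y : Set V) (r : SE) : Prop :=
  ∀ X ∈ P, StableWith G X Y r

/-- A partition `ℙ` is stable if it is stable w.r.t. `⟨Y,r⟩`
for all blocks `Y ∈ ℙ` and all edge labels `r`. -/
def PartStable {V SV SE : Type*} (G : FuzzyGraph V SV SE) (P : Set (Set V)) : Prop :=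
  ∀ Y ∈ P, ∀ r : SE, PartStableWith G P Y r

/-- `ℙ` is a refinement of `ℚ` if every block of `ℙ` is contained in some block of `ℚ`. -/
def Refines {V : Type*} (P Q : Set (Set V)) : Prop :=
  ∀ X ∈ P, ∃ Y ∈ Q, X ⊆ Y

/-! The blocks of `𝕊` cover `V`, and every block meeting `Y'` or `Y ∖ Y'` lies inside it, so
`sup E(x,r,Y')` and `sup E(x,r,Y ∖ Y')` are suprema of `sup E(x,r,W)` over blocks `W` of `𝕊`.
These are constant on each block of `𝕊` because `𝕊` is stable. Hence `𝕊` is stable with respect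
to both `⟨Y',r⟩` and `⟨Y ∖ Y',r⟩`, and the coarsest such refinement of `ℙ` is coarser than `𝕊`. -/

section

variable {V SV SE : Type*}

theorem Refines.trans {S P Q : Set (Set V)} (hSP : Refines S P) (hPQ : Refines P Q) :
    Refines S Q := fun X hX =>
  let ⟨Y, hY, hXY⟩ := hSP X hX
  let ⟨Z, hZ, hYZ⟩ := hPQ Y hY
  ⟨Z, hZ, hXY.trans hYZ⟩

/-- `Z` is a union of blocks of `S`. -/
def Saturated (S : Set (Set V)) (Z : Set V) : Prop :=
  ∀ W ∈ S, (W ∩ Z).Nonempty → W ⊆ Z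

theorem saturated_of_mem_of_refines {S P : Set (Set V)} (hP : Setoid.IsPartition P)
    (hSP : Refines S P) {Y : Set V} (hY : Y ∈ P) : Saturated S Y := by
  rintro W hW ⟨a, haW, haY⟩
  obtain ⟨B, hB, hWB⟩ := hSP W hW
  obtain ⟨_, -, hunique⟩ := hP.2 a
  have hBY : B = Y := (hunique B ⟨hB, hWB haW⟩).trans (hunique Y ⟨hY, haY⟩).symm
  exact hBY ▸ hWB

theorem Saturated.diff {S : Set (Set V)} {A B : Set V} (hA : Saturated S A)
    (hB : Saturated S B) : Saturated S (A \ B) := by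
  rintro W hW ⟨a, haW, haA, haB⟩
  refine fun w hw => ⟨hA W hW ⟨a, haW, haA⟩ hw, fun hwB => ?_⟩
  exact haB (hB W hW ⟨w, hw, hwB⟩ haW)

theorem le_supE (G : FuzzyGraph V SV SE) (x : V) (r : SE) {Y : Set V} {y : V} (hy : y ∈ Y) :
    G.edge x r y ≤ supE G x r Y :=
  le_iSup₂ (f := fun y (_ : y ∈ Y) => G.edge x r y) y hy

theorem supE_mono (G : FuzzyGraph V SV SE) (x : V) (r : SE) {Y Z : Set V} (hYZ : Y ⊆ Z) :
    supE G x r Y ≤ supE G x r Z :=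
  iSup₂_le fun _ hy => le_supE G x r (hYZ hy)

theorem PartStable.partStableWith_of_saturated {G : FuzzyGraph V SV SE} {S : Set (Set V)}
    (hstable : PartStable G S) (hcover : ⋃₀ S = Set.univ) {Z : Set V} (hZ : Saturated S Z)
    (r : SE) : PartStableWith G S Z r := by
  have supE_le : ∀ X ∈ S, ∀ a ∈ X, ∀ b ∈ X, supE G a r Z ≤ supE G b r Z := by
    intro X hX a ha b hb
    refine iSup₂_le fun y hy => ?_
    obtain ⟨W, hW, hyW⟩ := Set.mem_sUnion.1 (hcover.symm ▸ Set.mem_univ y)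
    calc G.edge a r y ≤ supE G a r W := le_supE G a r hyW
      _ = supE G b r W := hstable W hW r X hX a ha b hb
      _ ≤ supE G b r Z := supE_mono G b r (hZ W hW ⟨y, hyW, hy⟩)
  exact fun X hX x hx x' hx' => (supE_le X hX x hx x' hx').antisymm (supE_le X hX x' hx' x hx)

end

theorem stable_refinement_refines_split_general
    {V SV SE : Type*} (G : FuzzyGraph V SV SE)
    (S P Q : Set (Set V))
    (hS : Setoid.IsPartition S) (hP : Setoid.IsPartition P) (hQ : Setoid.IsPartition Q)
    (hSstable : PartStable G S) (hSP : Refines S P) (hPQ : Refines P Q)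
    (Y' Y : Set V) (hY' : Y' ∈ P) (hY : Y ∈ Q) (r : SE) :
    (PartStableWith G S Y' r ∧ PartStableWith G S (Y \ Y') r) ∧
      ∀ P' : Set (Set V),
        (Setoid.IsPartition P' ∧ Refines P' P ∧
          PartStableWith G P' Y' r ∧ PartStableWith G P' (Y \ Y') r ∧
          ∀ P'' : Set (Set V), Setoid.IsPartition P'' → Refines P'' P →
            PartStableWith G P'' Y' r → PartStableWith G P'' (Y \ Y') r →
            Refines P'' P') →
        Refines S P' := by
  have hY'sat : Saturated S Y' := saturated_of_mem_of_refines hP hSP hY'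
  have hYsat : Saturated S Y := saturated_of_mem_of_refines hQ (hSP.trans hPQ) hY
  have hst : PartStableWith G S Y' r ∧ PartStableWith G S (Y \ Y') r :=
    ⟨hSstable.partStableWith_of_saturated hS.sUnion_eq_univ hY'sat r,
      hSstable.partStableWith_of_saturated hS.sUnion_eq_univ (hYsat.diff hY'sat) r⟩
  refine ⟨hst, ?_⟩
  rintro P' ⟨-, -, -, -, hcoarsest⟩
  exact hcoarsest S hS hSP hst.1 hst.2

/-- Let `𝕊` be a stable partition refining `ℙ`, which refines `ℚ`, and let
`Y' ∈ ℙ`, `Y ∈ ℚ` with `Y' ⊊ Y`. Then `𝕊` is stable w.r.t. both `⟨Y',r⟩` and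
`⟨Y ∖ Y',r⟩`; consequently `𝕊` refines every coarsest refinement of `ℙ` that is
stable w.r.t. both `⟨Y',r⟩` and `⟨Y ∖ Y',r⟩`. -/
theorem stable_refinement_refines_split
    {V SV SE : Type*} (G : FuzzyGraph V SV SE)
    (S P Q : Set (Set V))
    (hS : Setoid.IsPartition S) (hP : Setoid.IsPartition P) (hQ : Setoid.IsPartition Q)
    (hSstable : PartStable G S) (hSP : Refines S P) (hPQ : Refines P Q)
    (Y' Y : Set V) (hY' : Y' ∈ P) (hY : Y ∈ Q) (hss : Y' ⊂ Y) (r : SE) :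
    (PartStableWith G S Y' r ∧ PartStableWith G S (Y \ Y') r) ∧
      ∀ P' : Set (Set V),
        (Setoid.IsPartition P' ∧ Refines P' P ∧
          PartStableWith G P' Y' r ∧ PartStableWith G P' (Y \ Y') r ∧
          ∀ P'' : Set (Set V), Setoid.IsPartition P'' → Refines P'' P →
            PartStableWith G P'' Y' r → PartStableWith G P'' (Y \ Y') r →
            Refines P'' P') →
        Refines S P' :=
  stable_refinement_refines_split_general G S P Q hS hP hQ hSstable hSP hPQ Y' Y hY' hY r
end

section
/- For any finite fuzzy labeled graph G = ⟨V, E, L, Σ_V, Σ_E⟩, if 𝒵 is a nonempty set of s-bisimulations of G, then the union ⋃𝒵 is also an s-bisimulation of G. -/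
/-- `x↑_r = {y ∈ V | E(x,r,y) > 0}`. -/
def upSet {V SV SE : Type*} (G : FuzzyGraph V SV SE) (x : V) (r : SE) : Set V :=
  {y | 0 < G.edge x r y}

/-- A nonempty binary relation `Z ⊆ V × V` is an s-bisimulation (crisp bisimulation
with counting successors) of `G`. -/
def IsSBisimulation {V SV SE : Type*} (G : FuzzyGraph V SV SE) (Z : V → V → Prop) : Prop :=
  (∃ x x', Z x x') ∧
  (∀ x x', Z x x' → G.lab x = G.lab x') ∧
  (∀ x x' (r : SE), Z x x' →
    ∃ h : upSet G x r → upSet G x' r, Function.Bijective h ∧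
      ∀ y : upSet G x r, Z ↑y ↑(h y) ∧ G.edge x r ↑y = G.edge x' r ↑(h y))

namespace IsSBisimulation

variable {V SV SE : Type*} {G : FuzzyGraph V SV SE} {Z W : V → V → Prop}

theorem exists_bijective_of_le (hZ : IsSBisimulation G Z) (hZW : Z ≤ W)
    {x x' : V} (r : SE) (hxx' : Z x x') :
    ∃ h : upSet G x r → upSet G x' r, Function.Bijective h ∧
      ∀ y : upSet G x r, W ↑y ↑(h y) ∧ G.edge x r ↑y = G.edge x' r ↑(h y) := by
  obtain ⟨h, hbij, hmatch⟩ := hZ.2.2 x x' r hxx'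
  exact ⟨h, hbij, fun y => ⟨hZW _ _ (hmatch y).1, (hmatch y).2⟩⟩

end IsSBisimulation

theorem sUnion_isSBisimulation_general {V SV SE : Type*}
    (G : FuzzyGraph V SV SE)
    (𝒵 : Set (V → V → Prop)) (hne : 𝒵.Nonempty)
    (h : ∀ Z ∈ 𝒵, IsSBisimulation G Z) :
    IsSBisimulation G (fun x x' => ∃ Z ∈ 𝒵, Z x x') := by
  obtain ⟨Z₀, hZ₀⟩ := hne
  obtain ⟨x, x', hxx'⟩ := (h Z₀ hZ₀).1
  refine ⟨⟨x, x', Z₀, hZ₀, hxx'⟩, ?_, ?_⟩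
  · rintro a a' ⟨Z, hZ, haa'⟩
    exact (h Z hZ).2.1 a a' haa'
  · rintro a a' r ⟨Z, hZ, haa'⟩
    exact (h Z hZ).exists_bijective_of_le (W := fun y y' => ∃ Z ∈ 𝒵, Z y y')
      (fun y y' hyy' => ⟨Z, hZ, hyy'⟩) r haa'

/-- If `𝒵` is a nonempty set of s-bisimulations of a finite fuzzy graph `G`,
then `⋃𝒵` is an s-bisimulation of `G`. -/
theorem sUnion_isSBisimulation {V SV SE : Type*}
    [Fintype V] [Fintype SV] [Fintype SE]
    (G : FuzzyGraph V SV SE)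
    (𝒵 : Set (V → V → Prop)) (hne : 𝒵.Nonempty)
    (h : ∀ Z ∈ 𝒵, IsSBisimulation G Z) :
    IsSBisimulation G (fun x x' => ∃ Z ∈ 𝒵, Z x x') :=
  sUnion_isSBisimulation_general G 𝒵 hne h
end

section
/- For any finite fuzzy labeled graph G = ⟨V, E, L, Σ_V, Σ_E⟩ with V nonempty, there exists a largest s-bisimulation of G (an s-bisimulation of G that contains every s-bisimulation of G), and this largest s-bisimulation is an equivalence relation on V. -/
/-!
The union of all s-bisimulations is again one (the defining conditions are local to a
pair, and equality is an s-bisimulation, so the union is nonempty). It is reflexive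
because equality is an s-bisimulation, symmetric because the converse of one is (invert
the bijections), and transitive because the composite of two is (compose them).
-/

namespace IsSBisimulation

variable {V SV SE : Type*} {G : FuzzyGraph V SV SE}

theorem eq [Nonempty V] (G : FuzzyGraph V SV SE) : IsSBisimulation G (· = ·) := by
  refine ⟨⟨Classical.arbitrary V, _, rfl⟩, ?_, ?_⟩
  · rintro x _ rfl
    rfl
  · rintro x _ r rfl
    exact ⟨id, Function.bijective_id, fun _ => ⟨rfl, rfl⟩⟩

theorem flip {Z : V → V → Prop} (hZ : IsSBisimulation G Z) : IsSBisimulation G (flip Z) := by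
  obtain ⟨⟨x, x', hxx'⟩, hlab, hstep⟩ := hZ
  refine ⟨⟨x', x, hxx'⟩, fun a b hba => (hlab b a hba).symm, fun a b r hba => ?_⟩
  obtain ⟨h, hbij, hh⟩ := hstep b a r hba
  let e := Equiv.ofBijective h hbij
  refine ⟨e.symm, e.symm.bijective, fun y => ?_⟩
  obtain ⟨hZy, hedge⟩ := hh (e.symm y)
  rw [show h (e.symm y) = y from e.apply_symm_apply y] at hZy hedge
  exact ⟨hZy, hedge.symm⟩

theorem comp {Z₁ Z₂ : V → V → Prop} (h₁ : IsSBisimulation G Z₁) (h₂ : IsSBisimulation G Z₂)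
    (hne : ∃ a c, Relation.Comp Z₁ Z₂ a c) : IsSBisimulation G (Relation.Comp Z₁ Z₂) := by
  refine ⟨hne, fun a c ⟨b, hab, hbc⟩ => (h₁.2.1 a b hab).trans (h₂.2.1 b c hbc), ?_⟩
  rintro a c r ⟨b, hab, hbc⟩
  obtain ⟨f, hf, hfZ⟩ := h₁.2.2 a b r hab
  obtain ⟨g, hg, hgZ⟩ := h₂.2.2 b c r hbc
  refine ⟨g ∘ f, hg.comp hf, fun y => ?_⟩
  exact ⟨⟨f y, (hfZ y).1, (hgZ (f y)).1⟩, (hfZ y).2.trans (hgZ (f y)).2⟩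

end IsSBisimulation

section Largest

variable {V SV SE : Type*}

def largestSBisimulation (G : FuzzyGraph V SV SE) (x x' : V) : Prop :=
  ∃ Z, IsSBisimulation G Z ∧ Z x x'

theorem le_largestSBisimulation {G : FuzzyGraph V SV SE} {Z : V → V → Prop}
    (hZ : IsSBisimulation G Z) {x x' : V} (h : Z x x') : largestSBisimulation G x x' :=
  ⟨Z, hZ, h⟩

theorem isSBisimulation_largestSBisimulation [Nonempty V] (G : FuzzyGraph V SV SE) :
    IsSBisimulation G (largestSBisimulation G) := by
  refine ⟨⟨Classical.arbitrary V, _, le_largestSBisimulation (.eq G) rfl⟩, ?_, ?_⟩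
  · rintro x x' ⟨Z, hZ, hxx'⟩
    exact hZ.2.1 x x' hxx'
  · rintro x x' r ⟨Z, hZ, hxx'⟩
    obtain ⟨h, hbij, hh⟩ := hZ.2.2 x x' r hxx'
    exact ⟨h, hbij, fun y => ⟨le_largestSBisimulation hZ (hh y).1, (hh y).2⟩⟩

theorem equivalence_largestSBisimulation [Nonempty V] (G : FuzzyGraph V SV SE) :
    Equivalence (largestSBisimulation G) where
  refl _ := le_largestSBisimulation (.eq G) rfl
  symm := fun ⟨_, hZ, h⟩ => le_largestSBisimulation hZ.flip h
  trans := fun ⟨_, hZ₁, hxy⟩ ⟨_, hZ₂, hyz⟩ =>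
    le_largestSBisimulation (hZ₁.comp hZ₂ ⟨_, _, _, hxy, hyz⟩) ⟨_, hxy, hyz⟩

end Largest

theorem largest_sBisimulation_exists_and_equivalence_general {V SV SE : Type*}
    [Nonempty V]
    (G : FuzzyGraph V SV SE) :
    ∃ Z : V → V → Prop, IsSBisimulation G Z ∧
      (∀ Z' : V → V → Prop, IsSBisimulation G Z' → ∀ x x', Z' x x' → Z x x') ∧
      Equivalence Z :=
  ⟨largestSBisimulation G, isSBisimulation_largestSBisimulation G,
    fun _ hZ _ _ => le_largestSBisimulation hZ, equivalence_largestSBisimulation G⟩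

/-- The largest s-bisimulation of a finite fuzzy graph (with nonempty vertex set)
exists and is an equivalence relation. -/
theorem largest_sBisimulation_exists_and_equivalence {V SV SE : Type*}
    [Fintype V] [Fintype SV] [Fintype SE] [Nonempty V]
    (G : FuzzyGraph V SV SE) :
    ∃ Z : V → V → Prop, IsSBisimulation G Z ∧
      (∀ Z' : V → V → Prop, IsSBisimulation G Z' → ∀ x x', Z' x x' → Z x x') ∧
      Equivalence Z :=
  largest_sBisimulation_exists_and_equivalence_general G
end
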